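/- arXiv:2301.10686 — 2 statements merged into one kernel-verified Lean document; each statement's English description precedes it below -/
import Mathlib

section
/- Let γ ∈ ℂ^× and let c ∈ ℂ^× not be a root of unity. If a rational function f ∈ ℂ(z) satisfies (1 - γz)·f(z) = (1 - γcz)·f(cz), then there exists a constant A ∈ ℂ such that f(z) = A/(1 - γz). -/
/-! The function `g = (1 - γz) f` is invariant under `z ↦ cz`. Writing `g = p / q`, invariance
says `p(cz) q(z) = p(z) q(cz)`; comparing leading coefficients gives `c ^ deg p = c ^ deg q`,
hence `deg p = deg q` since `c` is not a root of unity. Applied to `p - a q`, with `a` chosen to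
cancel the coefficient of degree `deg q`, this forces `p = a q`, so `g` is a constant `A`. -/

open Polynomial

section Dilation

variable {K : Type*} [Field K] {c : K}

theorem pow_injective_of_not_isOfFinOrder (hc : c ≠ 0) (hfin : ¬IsOfFinOrder c) :
    Function.Injective (c ^ · : ℕ → K) := by
  rw [← Units.val_mk0 hc, Units.isOfFinOrder_val, ← injective_pow_iff_not_isOfFinOrder] at hfin
  intro m n h
  exact hfin (Units.val_injective (by simpa using h))

theorem leadingCoeff_comp_C_mul_X (hc : c ≠ 0) (p : K[X]) :
    (p.comp (C c * X)).leadingCoeff = p.leadingCoeff * c ^ p.natDegree := by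
  rw [leadingCoeff_comp (by simp [natDegree_C_mul_X c hc]), leadingCoeff_C_mul_X]

theorem natDegree_eq_of_comp_C_mul_X_mul_eq (hc : c ≠ 0) (hfin : ¬IsOfFinOrder c)
    {p q : K[X]} (hp : p ≠ 0) (hq : q ≠ 0)
    (h : p.comp (C c * X) * q = p * q.comp (C c * X)) : p.natDegree = q.natDegree := by
  have hlc := congrArg leadingCoeff h
  rw [leadingCoeff_mul, leadingCoeff_mul, leadingCoeff_comp_C_mul_X hc,
    leadingCoeff_comp_C_mul_X hc] at hlc
  apply pow_injective_of_not_isOfFinOrder hc hfin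
  have hlc' : (c ^ p.natDegree - c ^ q.natDegree) * (p.leadingCoeff * q.leadingCoeff) = 0 := by
    linear_combination hlc
  simpa [sub_eq_zero, hp, hq] using hlc'

theorem exists_eq_C_mul_of_comp_C_mul_X_mul_eq (hc : c ≠ 0) (hfin : ¬IsOfFinOrder c)
    {p q : K[X]} (hq : q ≠ 0)
    (h : p.comp (C c * X) * q = p * q.comp (C c * X)) : ∃ a : K, p = C a * q := by
  set a := p.coeff q.natDegree / q.leadingCoeff
  refine ⟨a, sub_eq_zero.1 ?_⟩
  by_contra hr
  have hrel : (p - C a * q).comp (C c * X) * q = (p - C a * q) * q.comp (C c * X) := by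
    simp only [sub_comp, mul_comp, C_comp]
    linear_combination h
  have hdeg := natDegree_eq_of_comp_C_mul_X_mul_eq hc hfin hr hq hrel
  apply hr
  apply leadingCoeff_eq_zero.1
  rw [leadingCoeff, hdeg, coeff_sub, coeff_C_mul, ← leadingCoeff,
    div_mul_cancel₀ _ (leadingCoeff_ne_zero.2 hq), sub_self]

end Dilation

namespace RatFunc

variable {K : Type*} [Field K] {c : K} {σ : RatFunc K →+* RatFunc K}

theorem map_algebraMap_eq_comp (hσC : ∀ a : K, σ (C a) = C a) (hσX : σ X = C c * X)
    (p : K[X]) : σ (algebraMap K[X] (RatFunc K) p) =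
      algebraMap K[X] (RatFunc K) (p.comp (Polynomial.C c * Polynomial.X)) := by
  refine RingHom.congr_fun (f := σ.comp (algebraMap K[X] (RatFunc K)))
    (g := (algebraMap K[X] (RatFunc K)).comp (compRingHom (Polynomial.C c * Polynomial.X)))
    (Polynomial.ringHom_ext (fun a ↦ ?_) ?_) p
  · simp [algebraMap_C, hσC]
  · simp [algebraMap_C, algebraMap_X, hσX]

theorem exists_eq_C_of_map_eq_self (hc : c ≠ 0) (hfin : ¬IsOfFinOrder c)
    (hσC : ∀ a : K, σ (C a) = C a) (hσX : σ X = C c * X) {g : RatFunc K} (hg : σ g = g) :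
    ∃ a : K, g = C a := by
  set φ := algebraMap K[X] (RatFunc K)
  have hφ : Function.Injective φ := algebraMap_injective K
  have hq : φ g.denom ≠ 0 := (map_ne_zero_iff _ hφ).2 g.denom_ne_zero
  have hnum : g * φ g.denom = φ g.num := by rw [eq_comm, ← div_eq_iff hq, num_div_denom]
  have hnum' : g * φ (g.denom.comp (Polynomial.C c * Polynomial.X)) =
      φ (g.num.comp (Polynomial.C c * Polynomial.X)) := by
    rw [← map_algebraMap_eq_comp hσC hσX, ← map_algebraMap_eq_comp hσC hσX, ← hnum, map_mul, hg]
  obtain ⟨a, ha⟩ := exists_eq_C_mul_of_comp_C_mul_X_mul_eq (p := g.num) hc hfin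
    g.denom_ne_zero <| hφ <| by
      rw [map_mul, map_mul, ← hnum, ← hnum']
      ring
  refine ⟨a, mul_right_cancel₀ hq ?_⟩
  rw [hnum, ha, map_mul, algebraMap_C]

end RatFunc

theorem stmt1_general (γ c : ℂ) (hc : c ≠ 0)
    (hroot : ∀ n : ℕ, 0 < n → c ^ n ≠ 1)
    (σ : RatFunc ℂ →+* RatFunc ℂ)
    (hσC : ∀ a : ℂ, σ (RatFunc.C a) = RatFunc.C a)
    (hσX : σ RatFunc.X = RatFunc.C c * RatFunc.X)
    (f : RatFunc ℂ)
    (hf : (1 - RatFunc.C γ * RatFunc.X) * f = (1 - RatFunc.C (γ * c) * RatFunc.X) * σ f) :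
    ∃ A : ℂ, f = RatFunc.C A / (1 - RatFunc.C γ * RatFunc.X) := by
  have hfin : ¬IsOfFinOrder c := by simpa [isOfFinOrder_iff_pow_eq_one] using hroot
  have hD : (1 - RatFunc.C γ * RatFunc.X : RatFunc ℂ) ≠ 0 := by
    rw [← RatFunc.algebraMap_C, ← RatFunc.algebraMap_X, ← map_mul, ← map_one (algebraMap ℂ[X] _),
      ← map_sub, ne_eq, map_eq_zero_iff _ (RatFunc.algebraMap_injective ℂ)]
    exact ne_of_apply_ne (coeff · 0) (by simp)
  have hσD : σ (1 - RatFunc.C γ * RatFunc.X) = 1 - RatFunc.C (γ * c) * RatFunc.X := by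
    rw [map_sub, map_one, map_mul, hσC, hσX, map_mul, mul_assoc]
  obtain ⟨A, hA⟩ := RatFunc.exists_eq_C_of_map_eq_self hc hfin hσC hσX
    (g := (1 - RatFunc.C γ * RatFunc.X) * f) (by rw [map_mul, hσD, hf])
  exact ⟨A, by rw [eq_div_iff hD, ← hA, mul_comm]⟩

/-- If `f ∈ ℂ(z)` satisfies `(1 - γz) f(z) = (1 - γcz) f(cz)` with
`γ ∈ ℂˣ` and `c ∈ ℂˣ` not a root of unity, then `f(z) = A / (1 - γz)` for some
constant `A ∈ ℂ`. Substitution `z ↦ cz` is encoded by a ring homomorphism `σ`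
fixing constants and sending `X` to `c • X`. -/
theorem stmt1 (γ c : ℂ) (hγ : γ ≠ 0) (hc : c ≠ 0)
    (hroot : ∀ n : ℕ, 0 < n → c ^ n ≠ 1)
    (σ : RatFunc ℂ →+* RatFunc ℂ)
    (hσC : ∀ a : ℂ, σ (RatFunc.C a) = RatFunc.C a)
    (hσX : σ RatFunc.X = RatFunc.C c * RatFunc.X)
    (f : RatFunc ℂ)
    (hf : (1 - RatFunc.C γ * RatFunc.X) * f = (1 - RatFunc.C (γ * c) * RatFunc.X) * σ f) :
    ∃ A : ℂ, f = RatFunc.C A / (1 - RatFunc.C γ * RatFunc.X) :=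
  stmt1_general γ c hc hroot σ hσC hσX f hf
end

section
/- Let q ∈ ℂ^× not be a root of unity, a ∈ ℂ^×, and let V be a ℂ-vector space with basis (w_j)_{j≥0}. Define linear operators K, E₁, E₀ on V by K w_j = q^{-2j} w_j, E₁ w_j = w_{j-1} (with w_{-1} = 0), and E₀ w_j = −a q^{2+j} [j+1]_q (q − q^{-1})^{-1} w_{j+1}, where [m]_q = (q^m − q^{-m})/(q − q^{-1}). Then these operators satisfy: K is invertible, K E₁ K^{-1} = q² E₁, K E₀ K^{-1} = q^{-2} E₀, and both quantum Serre relations Σ_{r=0}^{3} (−1)^r (E₁^{3−r}/[3−r]_q!) E₀ (E₁^{r}/[r]_q!) = 0 and Σ_{r=0}^{3} (−1)^r (E₀^{3−r}/[3−r]_q!) E₁ (E₀^{r}/[r]_q!) = 0, where [m]_q! = Π_{s=1}^m [s]_q. -/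
/-!
In the basis `(w_j)`, `K` is diagonal with invertible eigenvalues `q^{-2j}`, `E₁` lowers and `E₀`
raises the index by one, which gives invertibility of `K` and the two `K`-relations. Writing
`E₀ w_j = c_j w_{j+1}`, the coefficient `c_j = α q^{2j} + β` is affine in `q^{2j}` and `c_{-1} = 0`.
Each word `E₁^{3-r} E₀ E₁^r` and `E₀^{3-r} E₁ E₀^r` sends `w_j` to a multiple of one basis vector,
so both Serre relations reduce to the vanishing of the third `q`-difference
`∑_r (-1)^r [3 choose r]_q c_{m+r}`. It kills `β` and `α q^{2j}` because
`∑_r (-1)^r [3 choose r]_q z^r = (1 - q^{-2} z)(1 - z)(1 - q^2 z)` vanishes at `z = 1` and `z = q^2`.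
-/

/-- The quantum integer `[m]_q = (q^m - q^{-m})/(q - q^{-1})`. -/
noncomputable def stmt7qnum (q : ℂ) (m : ℕ) : ℂ := (q ^ m - q⁻¹ ^ m) / (q - q⁻¹)

/-- The quantum factorial `[m]_q!`. -/
noncomputable def stmt7qfact (q : ℂ) : ℕ → ℂ
  | 0 => 1
  | n + 1 => stmt7qfact q n * stmt7qnum q (n + 1)

open Finset

section ShiftOperators

variable {R V : Type*} [CommRing R] [AddCommGroup V] [Module R V] (b : Module.Basis ℕ R V)
  {E F : Module.End R V} {c : ℤ → R}

theorem lower_pow_apply_add (hE : ∀ j, E (b (j + 1)) = b j) (r j : ℕ) :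
    (E ^ r) (b (j + r)) = b j := by
  induction r generalizing j with
  | zero => simp
  | succ r ih => rw [pow_succ, Module.End.mul_apply, ← add_assoc, hE, ih]

theorem lower_pow_apply_of_lt (hE0 : E (b 0) = 0) (hE : ∀ j, E (b (j + 1)) = b j) {r j : ℕ}
    (h : j < r) : (E ^ r) (b j) = 0 := by
  obtain ⟨k, rfl⟩ : ∃ k, r = k + (j + 1) := ⟨r - (j + 1), by omega⟩
  have hj : (E ^ j) (b j) = b 0 := by simpa using lower_pow_apply_add b hE j 0
  rw [pow_add, Module.End.mul_apply, pow_succ', Module.End.mul_apply, hj, hE0, map_zero]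

theorem lower_pow_mul_mul_lower_pow_apply (hE0 : E (b 0) = 0) (hE : ∀ j, E (b (j + 1)) = b j)
    (hF : ∀ j : ℕ, F (b j) = c j • b (j + 1)) (hc : c (-1) = 0) {n r : ℕ} (hr : r ≤ n + 1)
    (i : ℕ) : (E ^ (n + 1 - r) * F * E ^ r) (b (i + n)) = c (i + n - r) • b i := by
  rcases Nat.lt_or_ge (i + n) r with h | h
  · obtain ⟨rfl, rfl⟩ : r = n + 1 ∧ i = 0 := by omega
    have hn : ((0 : ℕ) : ℤ) + n - ((n + 1 : ℕ) : ℤ) = -1 := by push_cast; ring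
    rw [Module.End.mul_apply, lower_pow_apply_of_lt b hE0 hE h, map_zero, hn, hc, zero_smul]
  · obtain ⟨k, hk⟩ : ∃ k, i + n = k + r := ⟨i + n - r, by omega⟩
    have hk' : k + 1 = i + (n + 1 - r) := by omega
    rw [Module.End.mul_apply, Module.End.mul_apply, hk, lower_pow_apply_add b hE, hF, map_smul,
      hk', lower_pow_apply_add b hE]
    congr 2
    omega

theorem lower_pow_mul_mul_lower_pow_apply_of_lt (hE0 : E (b 0) = 0)
    (hE : ∀ j, E (b (j + 1)) = b j) (hF : ∀ j : ℕ, F (b j) = c j • b (j + 1)) {n r j : ℕ}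
    (hj : j < n) : (E ^ (n + 1 - r) * F * E ^ r) (b j) = 0 := by
  rcases Nat.lt_or_ge j r with h | h
  · rw [Module.End.mul_apply, lower_pow_apply_of_lt b hE0 hE h, map_zero]
  · obtain ⟨k, rfl⟩ : ∃ k, j = k + r := ⟨j - r, by omega⟩
    rw [Module.End.mul_apply, Module.End.mul_apply, lower_pow_apply_add b hE, hF, map_smul,
      lower_pow_apply_of_lt b hE0 hE (by omega), smul_zero]

theorem raise_pow_mul_lower_mul_raise_pow_apply (hE0 : E (b 0) = 0)
    (hE : ∀ j, E (b (j + 1)) = b j) (hF : ∀ j : ℕ, F (b j) = c j • b (j + 1)) (hc : c (-1) = 0)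
    {r : ℕ} (hr : r ≤ 3) (j : ℕ) :
    (F ^ (3 - r) * E * F ^ r) (b j) = (c j * c (j + 1) * c (j - 1 + r)) • b (j + 2) := by
  interval_cases r
  · rcases j with _ | j
    · simp [hE0, hc]
    · simp [pow_succ, hE, hF, smul_smul]
      ring_nf
  all_goals
    simp [pow_succ, hE, hF, smul_smul]
    ring_nf

theorem sum_smul_lower_pow_mul_mul_lower_pow_apply (hE0 : E (b 0) = 0)
    (hE : ∀ j, E (b (j + 1)) = b j) (hF : ∀ j : ℕ, F (b j) = c j • b (j + 1)) (hc : c (-1) = 0)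
    (w : ℕ → R) (i : ℕ) :
    (∑ r ∈ range 4, w r • (E ^ (3 - r) * F * E ^ r)) (b (i + 2)) =
      (∑ r ∈ range 4, w r * c (i + 2 - r)) • b i := by
  rw [LinearMap.sum_apply, sum_smul]
  refine sum_congr rfl fun r hr => ?_
  rw [LinearMap.smul_apply, ← smul_smul]
  exact congrArg _
    (lower_pow_mul_mul_lower_pow_apply b hE0 hE hF hc (n := 2) (by simp at hr; omega) i)

theorem sum_smul_lower_pow_mul_mul_lower_pow_apply_of_lt (hE0 : E (b 0) = 0)
    (hE : ∀ j, E (b (j + 1)) = b j) (hF : ∀ j : ℕ, F (b j) = c j • b (j + 1))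
    (w : ℕ → R) {j : ℕ} (hj : j < 2) :
    (∑ r ∈ range 4, w r • (E ^ (3 - r) * F * E ^ r)) (b j) = 0 := by
  simp only [LinearMap.sum_apply, LinearMap.smul_apply,
    lower_pow_mul_mul_lower_pow_apply_of_lt b hE0 hE hF (n := 2) hj, smul_zero, sum_const_zero]

theorem sum_smul_raise_pow_mul_lower_mul_raise_pow_apply (hE0 : E (b 0) = 0)
    (hE : ∀ j, E (b (j + 1)) = b j) (hF : ∀ j : ℕ, F (b j) = c j • b (j + 1)) (hc : c (-1) = 0)
    (w : ℕ → R) (j : ℕ) :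
    (∑ r ∈ range 4, w r • (F ^ (3 - r) * E * F ^ r)) (b j) =
      (c j * c (j + 1) * ∑ r ∈ range 4, w r * c (j - 1 + r)) • b (j + 2) := by
  rw [LinearMap.sum_apply, mul_sum, sum_smul]
  refine sum_congr rfl fun r hr => ?_
  rw [LinearMap.smul_apply,
    raise_pow_mul_lower_mul_raise_pow_apply b hE0 hE hF hc (by simp at hr; omega), smul_smul]
  ring_nf

end ShiftOperators

section WeightOperator

variable {R V : Type*} [Field R] [AddCommGroup V] [Module R V]

theorem bijective_of_apply_basis_eq_smul {ι : Type*} (b : Module.Basis ι R V)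
    {f : Module.End R V} (u : ι → Rˣ) (h : ∀ i, f (b i) = (u i : R) • b i) :
    Function.Bijective f := by
  have hf : f = (b.equiv (b.unitsSMul u) (Equiv.refl ι) : Module.End R V) :=
    b.ext fun i => by simp [h, Module.Basis.unitsSMul_apply, Units.smul_def]
  rw [hf]
  exact (b.equiv (b.unitsSMul u) (Equiv.refl ι)).bijective

variable (b : Module.Basis ℕ R V) {K : Module.End R V} {μ : R}

theorem mul_lower_eq_smul (hK : ∀ j, K (b j) = μ ^ j • b j) (hμ : μ ≠ 0) {E : Module.End R V}
    (hE0 : E (b 0) = 0) (hE : ∀ j, E (b (j + 1)) = b j) : K * E = μ⁻¹ • (E * K) := by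
  refine b.ext fun j => ?_
  rcases j with _ | j
  · simp [hK, hE0]
  · simp only [Module.End.mul_apply, LinearMap.smul_apply, hK, hE, map_smul, smul_smul]
    rw [pow_succ', inv_mul_cancel_left₀ hμ]

theorem mul_raise_eq_smul (hK : ∀ j, K (b j) = μ ^ j • b j) {F : Module.End R V} {c : ℕ → R}
    (hF : ∀ j, F (b j) = c j • b (j + 1)) : K * F = μ • (F * K) := by
  refine b.ext fun j => ?_
  simp only [Module.End.mul_apply, LinearMap.smul_apply, hK, hF, map_smul, smul_smul]
  ring_nf

end WeightOperator

section SerreWeights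

variable {q : ℂ}

theorem sub_inv_ne_zero_of_sq_ne_one (hq0 : q ≠ 0) (hq2 : q ^ 2 ≠ 1) : q - q⁻¹ ≠ 0 := by
  intro h
  apply hq2
  field_simp at h
  linear_combination h

theorem stmt7qnum_one (hd : q - q⁻¹ ≠ 0) : stmt7qnum q 1 = 1 := by
  simp [stmt7qnum, hd]

theorem sq_mul_stmt7qnum_three (hq0 : q ≠ 0) (hd : q - q⁻¹ ≠ 0) :
    q ^ 2 * stmt7qnum q 3 = 1 + q ^ 2 + q ^ 4 := by
  have hq : q * q⁻¹ = 1 := mul_inv_cancel₀ hq0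
  have h3 : stmt7qnum q 3 = q ^ 2 + 1 + q⁻¹ ^ 2 := by
    rw [stmt7qnum, div_eq_iff hd]
    linear_combination (q - q⁻¹) * hq
  rw [h3]
  linear_combination (q * q⁻¹ + 1) * hq

noncomputable def serreWeight (q : ℂ) (r : ℕ) : ℂ :=
  (-1) ^ r * (stmt7qfact q (3 - r) * stmt7qfact q r)⁻¹

theorem serreWeight_three_sub {r : ℕ} (hr : r ≤ 3) :
    serreWeight q (3 - r) = -serreWeight q r := by
  interval_cases r <;> norm_num [serreWeight, mul_comm]

theorem sum_serreWeight : ∑ r ∈ range 4, serreWeight q r = 0 := by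
  norm_num [sum_range_succ, serreWeight, mul_comm]

theorem sum_serreWeight_mul_pow (hq0 : q ≠ 0) (hq2 : q ^ 2 ≠ 1) (hq6 : q ^ 6 ≠ 1) :
    ∑ r ∈ range 4, serreWeight q r * (q ^ 2) ^ r = 0 := by
  have hd := sub_inv_ne_zero_of_sq_ne_one hq0 hq2
  have h3 := sq_mul_stmt7qnum_three hq0 hd
  have h3' : stmt7qnum q 3 * (stmt7qnum q 3)⁻¹ = 1 := by
    refine mul_inv_cancel₀ fun h => hq6 ?_
    rw [h, mul_zero] at h3
    linear_combination (1 - q ^ 2) * h3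
  norm_num [sum_range_succ, serreWeight, stmt7qfact, stmt7qnum_one hd]
  -- `[2]_q⁻¹ = [3]_q ([2]_q [3]_q)⁻¹`, then `q² [3]_q = 1 + q² + q⁴` turns `q²(1 - q²)` into `1 - q⁶`
  linear_combination ((stmt7qnum q 2)⁻¹ * q ^ 2 * (1 - q ^ 2)) * h3'
    - ((stmt7qnum q 2)⁻¹ * (stmt7qnum q 3)⁻¹ * (1 - q ^ 2)) * h3

theorem sum_serreWeight_mul_affine (hq0 : q ≠ 0) (hq2 : q ^ 2 ≠ 1) (hq6 : q ^ 6 ≠ 1)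
    (α β : ℂ) (m : ℤ) :
    ∑ r ∈ range 4, serreWeight q r * (α * (q ^ 2) ^ (m + r) + β) = 0 := by
  have hq2' : q ^ 2 ≠ 0 := pow_ne_zero 2 hq0
  calc ∑ r ∈ range 4, serreWeight q r * (α * (q ^ 2) ^ (m + r) + β)
      = α * (q ^ 2) ^ m * ∑ r ∈ range 4, serreWeight q r * (q ^ 2) ^ r +
          β * ∑ r ∈ range 4, serreWeight q r := by
        rw [mul_sum, mul_sum, ← sum_add_distrib]
        refine sum_congr rfl fun r _ => ?_
        rw [zpow_add₀ hq2', zpow_natCast]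
        ring
    _ = 0 := by rw [sum_serreWeight_mul_pow hq0 hq2 hq6, sum_serreWeight]; ring

end SerreWeights

section PrefundamentalCoefficient

variable {q : ℂ}

/-- The coefficient of `E₀` on `w_n`, extended to `n : ℤ`: it is affine in `q^{2n}` and vanishes
at `n = -1`, so `E₁ w₀ = 0` fits the same formulas as the other basis vectors. -/
noncomputable def prefCoeff (q a : ℂ) (n : ℤ) : ℂ :=
  -a * q ^ 2 * (q * (q ^ 2) ^ n - q⁻¹) / (q - q⁻¹) ^ 2

theorem prefCoeff_natCast (hq0 : q ≠ 0) (a : ℂ) (j : ℕ) :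
    prefCoeff q a j = -a * q ^ (2 + j) * stmt7qnum q (j + 1) / (q - q⁻¹) := by
  have hq : q ^ j * q⁻¹ ^ j = 1 := by rw [← mul_pow, mul_inv_cancel₀ hq0, one_pow]
  rw [prefCoeff, stmt7qnum, zpow_natCast, mul_div_assoc', div_div, ← sq]
  congr 1
  linear_combination (-a * q ^ 2 * q⁻¹) * hq

theorem prefCoeff_neg_one (hq0 : q ≠ 0) (a : ℂ) : prefCoeff q a (-1) = 0 := by
  have hq : q * (q ^ 2) ^ (-1 : ℤ) = q⁻¹ := by
    rw [zpow_neg_one, pow_two, mul_inv, mul_inv_cancel_left₀ hq0]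
  rw [prefCoeff, hq, sub_self, mul_zero, zero_div]

theorem sum_serreWeight_mul_prefCoeff_add (hq0 : q ≠ 0) (hq2 : q ^ 2 ≠ 1) (hq6 : q ^ 6 ≠ 1)
    (a : ℂ) (m : ℤ) : ∑ r ∈ range 4, serreWeight q r * prefCoeff q a (m + r) = 0 := by
  have h : ∀ n, prefCoeff q a n =
      -a * q ^ 3 / (q - q⁻¹) ^ 2 * (q ^ 2) ^ n + a * q ^ 2 * q⁻¹ / (q - q⁻¹) ^ 2 := fun n => by
    rw [prefCoeff]
    ring
  simp only [h]
  exact sum_serreWeight_mul_affine hq0 hq2 hq6 _ _ m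

theorem sum_serreWeight_mul_prefCoeff_sub (hq0 : q ≠ 0) (hq2 : q ^ 2 ≠ 1) (hq6 : q ^ 6 ≠ 1)
    (a : ℂ) (m : ℤ) : ∑ r ∈ range 4, serreWeight q r * prefCoeff q a (m - r) = 0 := by
  rw [← sum_range_reflect]
  calc ∑ r ∈ range 4, serreWeight q (4 - 1 - r) * prefCoeff q a (m - (4 - 1 - r : ℕ))
      = ∑ r ∈ range 4, -(serreWeight q r * prefCoeff q a (m - 3 + r)) := by
        refine sum_congr rfl fun r hr => ?_
        have hr : r ≤ 3 := by simp at hr; omega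
        rw [show 4 - 1 - r = 3 - r from rfl, serreWeight_three_sub hr, Nat.cast_sub hr]
        ring_nf
    _ = 0 := by rw [sum_neg_distrib, sum_serreWeight_mul_prefCoeff_add hq0 hq2 hq6, neg_zero]

end PrefundamentalCoefficient

theorem stmt7_general (q a : ℂ) (hq0 : q ≠ 0) (hroot : ∀ n : ℕ, 0 < n → q ^ n ≠ 1)
    (V : Type) [AddCommGroup V] [Module ℂ V] (b : Module.Basis ℕ ℂ V)
    (K E1 E0 : Module.End ℂ V)
    (hK : ∀ j : ℕ, K (b j) = (q ^ (2 * j))⁻¹ • b j)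
    (hE1zero : E1 (b 0) = 0)
    (hE1 : ∀ j : ℕ, E1 (b (j + 1)) = b j)
    (hE0 : ∀ j : ℕ, E0 (b j) =
      (-a * q ^ (2 + j) * stmt7qnum q (j + 1) / (q - q⁻¹)) • b (j + 1)) :
    Function.Bijective K ∧
    K * E1 = (q ^ 2 : ℂ) • (E1 * K) ∧
    K * E0 = ((q ^ 2 : ℂ))⁻¹ • (E0 * K) ∧
    (∑ r ∈ Finset.range 4,
      ((-1 : ℂ) ^ r * (stmt7qfact q (3 - r) * stmt7qfact q r)⁻¹) •
        (E1 ^ (3 - r) * E0 * E1 ^ r)) = 0 ∧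
    (∑ r ∈ Finset.range 4,
      ((-1 : ℂ) ^ r * (stmt7qfact q (3 - r) * stmt7qfact q r)⁻¹) •
        (E0 ^ (3 - r) * E1 * E0 ^ r)) = 0 := by
  have hq2 : q ^ 2 ≠ 1 := hroot 2 two_pos
  have hq6 : q ^ 6 ≠ 1 := hroot 6 (by norm_num)
  have hμ : (q ^ 2)⁻¹ ≠ 0 := inv_ne_zero (pow_ne_zero 2 hq0)
  have hK' : ∀ j : ℕ, K (b j) = (q ^ 2)⁻¹ ^ j • b j := fun j => by rw [hK, pow_mul, inv_pow]
  have hE0' : ∀ j : ℕ, E0 (b j) = prefCoeff q a j • b (j + 1) := fun j => by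
    rw [hE0, prefCoeff_natCast hq0]
  have hc := prefCoeff_neg_one hq0 a
  refine ⟨?_, ?_, mul_raise_eq_smul b hK' hE0, ?_, ?_⟩
  · exact bijective_of_apply_basis_eq_smul b (fun j => Units.mk0 _ hμ ^ j) hK'
  · simpa only [inv_inv] using mul_lower_eq_smul b hK' hμ hE1zero hE1
  · show ∑ r ∈ range 4, serreWeight q r • (E1 ^ (3 - r) * E0 * E1 ^ r) = 0
    refine b.ext fun j => ?_
    rcases Nat.lt_or_ge j 2 with hj | hj
    · exact sum_smul_lower_pow_mul_mul_lower_pow_apply_of_lt b hE1zero hE1 hE0' _ hj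
    · obtain ⟨i, rfl⟩ := Nat.exists_eq_add_of_le' hj
      rw [sum_smul_lower_pow_mul_mul_lower_pow_apply b hE1zero hE1 hE0' hc,
        sum_serreWeight_mul_prefCoeff_sub hq0 hq2 hq6, zero_smul, LinearMap.zero_apply]
  · show ∑ r ∈ range 4, serreWeight q r • (E0 ^ (3 - r) * E1 * E0 ^ r) = 0
    refine b.ext fun j => ?_
    rw [sum_smul_raise_pow_mul_lower_mul_raise_pow_apply b hE1zero hE1 hE0' hc,
      sum_serreWeight_mul_prefCoeff_add hq0 hq2 hq6, mul_zero, zero_smul, LinearMap.zero_apply]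

/-- The explicit operators `K, E₁, E₀` of the positive prefundamental
representation `L⁺_{1,a}` of `U_q(b) ⊆ U_q(ŝl₂)` satisfy the defining relations
of the Borel subalgebra: `K` invertible, `K E₁ K⁻¹ = q² E₁`, `K E₀ K⁻¹ = q⁻² E₀`
and both quantum Serre relations (with `1 - C_{ij} = 3` terms). -/
theorem stmt7 (q a : ℂ) (hq0 : q ≠ 0) (hroot : ∀ n : ℕ, 0 < n → q ^ n ≠ 1) (ha : a ≠ 0)
    (V : Type) [AddCommGroup V] [Module ℂ V] (b : Module.Basis ℕ ℂ V)
    (K E1 E0 : Module.End ℂ V)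
    (hK : ∀ j : ℕ, K (b j) = (q ^ (2 * j))⁻¹ • b j)
    (hE1zero : E1 (b 0) = 0)
    (hE1 : ∀ j : ℕ, E1 (b (j + 1)) = b j)
    (hE0 : ∀ j : ℕ, E0 (b j) =
      (-a * q ^ (2 + j) * stmt7qnum q (j + 1) / (q - q⁻¹)) • b (j + 1)) :
    Function.Bijective K ∧
    K * E1 = (q ^ 2 : ℂ) • (E1 * K) ∧
    K * E0 = ((q ^ 2 : ℂ))⁻¹ • (E0 * K) ∧
    (∑ r ∈ Finset.range 4,
      ((-1 : ℂ) ^ r * (stmt7qfact q (3 - r) * stmt7qfact q r)⁻¹) •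
        (E1 ^ (3 - r) * E0 * E1 ^ r)) = 0 ∧
    (∑ r ∈ Finset.range 4,
      ((-1 : ℂ) ^ r * (stmt7qfact q (3 - r) * stmt7qfact q r)⁻¹) •
        (E0 ^ (3 - r) * E1 * E0 ^ r)) = 0 :=
  stmt7_general q a hq0 hroot V b K E1 E0 hK hE1zero hE1 hE0
end
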